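/- arXiv:2006.12800 — 4 statements merged into one kernel-verified Lean document; each statement's English description precedes it below -/
import Mathlib

section
/- Let h(t) = P(Y = k ∧ Z ≤ s(t)) where s is the fractile function of Z (so P(Z ≤ s(t)) = t for all t), and suppose the conditional probability function g(z) = P(Y = k | Z = z) is continuous and s is differentiable. Then h is differentiable and h'(t) = P(Y = k | Z = s(t)). -/
/-!
Let `μ` be the law of `Z` and `ν` the law of `Z` on the event `Y = k`, so that `ν` has density
`g` with respect to `μ`. For any finite measure, the difference of its distribution function
at `s t` and `s t₀` is the signed mass of the interval from `s t₀` to `s t`. For `μ` this is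
`t - t₀` by the fractile property, and for `ν` it is the `μ`-interval integral of `g`, so
`h t - h t₀ - (t - t₀) g (s t₀)` is the integral of `g - g (s t₀)` over that interval. By
continuity of `s` and `g` the integrand is small there, while the interval has `μ`-mass `|t - t₀|`.
-/

open MeasureTheory Set Filter Topology Interval

theorem measureReal_Iic_sub_measureReal_Iic {ν : Measure ℝ} [IsFiniteMeasure ν] (x y : ℝ) :
    ν.real (Iic y) - ν.real (Iic x) = ν.real (Ioc x y) - ν.real (Ioc y x) := by
  rcases le_total x y with hxy | hyx
  · rw [Ioc_eq_empty_of_le hxy, measureReal_empty, sub_zero, ← Iic_sdiff_Iic,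
      measureReal_sdiff (Iic_subset_Iic.2 hxy) measurableSet_Iic]
  · rw [Ioc_eq_empty_of_le hyx, measureReal_empty, zero_sub, ← Iic_sdiff_Iic,
      measureReal_sdiff (Iic_subset_Iic.2 hyx) measurableSet_Iic, neg_sub]

theorem measureReal_Iic_sub_measureReal_Iic_eq_intervalIntegral {μ ν : Measure ℝ}
    [IsFiniteMeasure ν] {g : ℝ → ℝ}
    (hν : ∀ A, MeasurableSet A → ν.real A = ∫ z in A, g z ∂μ) (x y : ℝ) :
    ν.real (Iic y) - ν.real (Iic x) = ∫ z in x..y, g z ∂μ := by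
  rw [measureReal_Iic_sub_measureReal_Iic, hν _ measurableSet_Ioc, hν _ measurableSet_Ioc]
  rfl

theorem hasDerivAt_of_sub_eq_intervalIntegral {μ : Measure ℝ} [IsLocallyFiniteMeasure μ]
    {F s g : ℝ → ℝ} {t₀ : ℝ} (hs : ContinuousAt s t₀) (hg : Continuous g)
    (hF : ∀ᶠ t in 𝓝 t₀, F t - F t₀ = ∫ z in s t₀..s t, g z ∂μ)
    (hμ : ∀ᶠ t in 𝓝 t₀, μ.real (Ioc (s t₀) (s t)) - μ.real (Ioc (s t) (s t₀)) = t - t₀) :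
    HasDerivAt F (g (s t₀)) t₀ := by
  rw [hasDerivAt_iff_isLittleO, Asymptotics.isLittleO_iff]
  intro ε hε
  obtain ⟨δ, hδ, hgδ⟩ := Metric.continuous_iff.1 hg (s t₀) ε hε
  filter_upwards [hF, hμ, hs (Metric.ball_mem_nhds _ hδ)] with t hFt hμt hst
  have hnear : ∀ z ∈ Ι (s t₀) (s t), ‖g z - g (s t₀)‖ ≤ ε := fun z hz =>
    (hgδ z <| (convex_ball _ _).ordConnected.uIcc_subset
      (Metric.mem_ball_self hδ) hst (uIoc_subset_uIcc hz)).le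
  calc ‖F t - F t₀ - (t - t₀) • g (s t₀)‖
      = ‖∫ z in s t₀..s t, (g z - g (s t₀)) ∂μ‖ := by
        rw [intervalIntegral.integral_sub (hg.intervalIntegrable _ _) intervalIntegrable_const,
          intervalIntegral.integral_const', hμt, hFt]
    _ ≤ |∫ _ in s t₀..s t, ε ∂μ| :=
        intervalIntegral.norm_integral_le_abs_of_norm_le
          ((ae_restrict_iff' measurableSet_uIoc).2 (ae_of_all _ hnear)) intervalIntegrable_const
    _ = ε * ‖t - t₀‖ := by
        rw [intervalIntegral.integral_const', hμt, smul_eq_mul, abs_mul, abs_of_pos hε,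
          Real.norm_eq_abs, mul_comm]

theorem stmt1_general {Ω : Type*} [MeasurableSpace Ω] (P : Measure Ω) [IsProbabilityMeasure P]
    (Z : Ω → ℝ) (hZ : Measurable Z) (Y : Ω → ℕ) (k : ℕ)
    (s : ℝ → ℝ) (hsd : Differentiable ℝ s)
    (hfrac : ∀ t ∈ Set.Icc (0 : ℝ) 1, (P {ω | Z ω ≤ s t}).toReal = t)
    (g : ℝ → ℝ) (hgc : Continuous g)
    (hg : ∀ A : Set ℝ, MeasurableSet A →
      (P {ω | Y ω = k ∧ Z ω ∈ A}).toReal = ∫ z in A, g z ∂(P.map Z))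
    (h : ℝ → ℝ) (hh : ∀ t, h t = (P {ω | Y ω = k ∧ Z ω ≤ s t}).toReal) :
    ∀ t ∈ Set.Ioo (0 : ℝ) 1, HasDerivAt h (g (s t)) t := by
  intro t₀ ht₀
  set ν := (P.restrict {ω | Y ω = k}).map Z
  have hν : ∀ A, MeasurableSet A → ν.real A = (P {ω | Y ω = k ∧ Z ω ∈ A}).toReal :=
    fun A hA => by
      rw [map_measureReal_apply hZ hA, measureReal_restrict_apply (hZ hA), inter_comm]
      rfl
  have hν_Iic : ∀ x, ν.real (Iic x) = (P {ω | Y ω = k ∧ Z ω ≤ x}).toReal :=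
    fun x => hν _ measurableSet_Iic
  have hμ_Iic : ∀ t ∈ Icc (0 : ℝ) 1, (P.map Z).real (Iic (s t)) = t := fun t ht => by
    rw [map_measureReal_apply hZ measurableSet_Iic]
    exact hfrac t ht
  apply hasDerivAt_of_sub_eq_intervalIntegral (μ := P.map Z) hsd.continuous.continuousAt hgc
  · refine Eventually.of_forall fun t => ?_
    rw [hh, hh, ← hν_Iic, ← hν_Iic]
    exact measureReal_Iic_sub_measureReal_Iic_eq_intervalIntegral
      (fun A hA => (hν A hA).trans (hg A hA)) _ _
  · filter_upwards [Icc_mem_nhds ht₀.1 ht₀.2] with t ht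
    rw [← measureReal_Iic_sub_measureReal_Iic, hμ_Iic t ht, hμ_Iic t₀ (Ioo_subset_Icc_self ht₀)]

/-- If `h t = P(Y = k ∧ Z ≤ s t)` where `s` is the fractile function of `Z`
(so `P(Z ≤ s t) = t`), the conditional probability function
`g z = P(Y = k | Z = z)` is continuous (given as a density of the joint measure
with respect to the law of `Z`) and `s` is differentiable, then `h` is
differentiable with `h' t = P(Y = k | Z = s t) = g (s t)`. -/
theorem stmt1 {Ω : Type*} [MeasurableSpace Ω] (P : Measure Ω) [IsProbabilityMeasure P]
    (Z : Ω → ℝ) (hZ : Measurable Z) (Y : Ω → ℕ) (hY : Measurable Y) (k : ℕ)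
    (s : ℝ → ℝ) (hsd : Differentiable ℝ s)
    (hfrac : ∀ t ∈ Set.Icc (0 : ℝ) 1, (P {ω | Z ω ≤ s t}).toReal = t)
    (g : ℝ → ℝ) (hgc : Continuous g)
    (hg : ∀ A : Set ℝ, MeasurableSet A →
      (P {ω | Y ω = k ∧ Z ω ∈ A}).toReal = ∫ z in A, g z ∂(P.map Z))
    (h : ℝ → ℝ) (hh : ∀ t, h t = (P {ω | Y ω = k ∧ Z ω ≤ s t}).toReal) :
    ∀ t ∈ Set.Ioo (0 : ℝ) 1, HasDerivAt h (g (s t)) t :=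
  stmt1_general P Z hZ Y k s hsd hfrac g hgc hg h hh
end

section
/- If the miscalibration has constant sign, i.e., g(z) − z ≥ 0 for μ-a.e. z ∈ [0,1] (or g(z) − z ≤ 0 for μ-a.e. z), where g(z) = P(Y = k | Z_k = z), then the KS error sup_{σ∈[0,1]} |P(Y=k, Z_k ≤ σ) − ∫_{[0,σ]} z dμ(z)| equals the expected calibration error ∫_{[0,1]} |g(z) − z| dμ(z), and the supremum is attained at σ = 1. -/
open MeasureTheory Set

/-! When `g - id` has constant sign, the absolute value of its integral over `[0, 1]` is the
integral of its absolute value, while over any `[0, σ] ⊆ [0, 1]` it can only be smaller. The KS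
quantity at `σ` is exactly `∫_{[0,σ]} (g - id) dμ`, because `Z_k ≥ 0` turns the event
`Z_k ≤ σ` into `Z_k ∈ [0, σ]`. -/

/-- For `i ∉ s` the inner supremum `⨆ _ : i ∈ s, f i` is `sSup ∅ = 0` in `ℝ`. -/
theorem Real.biSup_eq_of_forall_le_of_mem {ι : Type*} {s : Set ι} {f : ι → ℝ} {a : ι}
    (ha : a ∈ s) (hmax : ∀ i ∈ s, f i ≤ f a) (h0 : 0 ≤ f a) : ⨆ i ∈ s, f i = f a := by
  have hle : ∀ i, ⨆ _ : i ∈ s, f i ≤ f a := fun i => Real.iSup_le (hmax i) h0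
  refine le_antisymm (Real.iSup_le hle h0) ?_
  calc f a = ⨆ _ : a ∈ s, f a := (ciSup_pos (f := fun _ => f a) ha).symm
    _ ≤ ⨆ i ∈ s, f i := le_ciSup ⟨f a, by rintro _ ⟨i, rfl⟩; exact hle i⟩ a

section

variable {α : Type*} [MeasurableSpace α] {μ : Measure α} {f : α → ℝ}

theorem abs_integral_eq_integral_abs_of_ae_nonneg_or_nonpos
    (hf : 0 ≤ᵐ[μ] f ∨ f ≤ᵐ[μ] 0) : |∫ x, f x ∂μ| = ∫ x, |f x| ∂μ := by
  rcases hf with hf | hf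
  · rw [abs_of_nonneg (integral_nonneg_of_ae hf)]
    exact integral_congr_ae (hf.mono fun x hx => (abs_of_nonneg hx).symm)
  · rw [abs_of_nonpos (integral_nonpos_of_ae hf), ← integral_neg]
    exact integral_congr_ae (hf.mono fun x hx => (abs_of_nonpos hx).symm)

theorem abs_setIntegral_le_setIntegral_abs_of_subset {s t : Set α} (hst : s ⊆ t)
    (hf : IntegrableOn f t μ) : |∫ x in s, f x ∂μ| ≤ ∫ x in t, |f x| ∂μ :=
  abs_integral_le_integral_abs.trans <|
    setIntegral_mono_set hf.abs (Filter.Eventually.of_forall fun _ => abs_nonneg _)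
      hst.eventuallyLE

end

theorem stmt6_general {Ω : Type*} [MeasurableSpace Ω] (P : Measure Ω) [IsProbabilityMeasure P]
    (Zk : Ω → ℝ) (hZ01 : ∀ ω, Zk ω ∈ Set.Icc (0 : ℝ) 1)
    (Y : Ω → ℕ) (k : ℕ)
    (g : ℝ → ℝ) (hgi : Integrable g (P.map Zk))
    (hg : ∀ A : Set ℝ, MeasurableSet A →
      (P {ω | Y ω = k ∧ Zk ω ∈ A}).toReal = ∫ σ in A, g σ ∂(P.map Zk))
    (hsign : (∀ᵐ z ∂(P.map Zk), z ≤ g z) ∨ (∀ᵐ z ∂(P.map Zk), g z ≤ z)) :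
    (⨆ σ ∈ Set.Icc (0 : ℝ) 1,
      |(P {ω | Y ω = k ∧ Zk ω ≤ σ}).toReal - ∫ z in Set.Icc 0 σ, z ∂(P.map Zk)|)
        = ∫ z in Set.Icc (0 : ℝ) 1, |g z - z| ∂(P.map Zk) ∧
    |(P {ω | Y ω = k ∧ Zk ω ≤ (1 : ℝ)}).toReal - ∫ z in Set.Icc (0 : ℝ) 1, z ∂(P.map Zk)|
        = ∫ z in Set.Icc (0 : ℝ) 1, |g z - z| ∂(P.map Zk) := by
  set μ := P.map Zk
  have hks : ∀ σ : ℝ, (P {ω | Y ω = k ∧ Zk ω ≤ σ}).toReal - ∫ z in Icc 0 σ, z ∂μ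
      = ∫ z in Icc 0 σ, (g z - z) ∂μ := fun σ => by
    have hevent : {ω | Y ω = k ∧ Zk ω ≤ σ} = {ω | Y ω = k ∧ Zk ω ∈ Icc 0 σ} := by
      ext ω; simp [(hZ01 ω).1]
    rw [hevent, hg _ measurableSet_Icc]
    exact (integral_sub hgi.integrableOn continuous_id.integrableOn_Icc).symm
  have hattained : |(P {ω | Y ω = k ∧ Zk ω ≤ (1 : ℝ)}).toReal - ∫ z in Icc 0 1, z ∂μ|
      = ∫ z in Icc 0 1, |g z - z| ∂μ := by
    rw [hks 1]
    refine abs_integral_eq_integral_abs_of_ae_nonneg_or_nonpos (hsign.imp ?_ ?_) <;>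
      exact fun h => ae_restrict_of_ae (h.mono fun z hz => by simpa using hz)
  refine ⟨?_, hattained⟩
  rw [← hattained]
  refine Real.biSup_eq_of_forall_le_of_mem (right_mem_Icc.2 zero_le_one) (fun σ hσ => ?_)
    (abs_nonneg _)
  rw [hks σ, hattained]
  exact abs_setIntegral_le_setIntegral_abs_of_subset (Icc_subset_Icc_right hσ.2)
    (hgi.integrableOn.sub continuous_id.integrableOn_Icc)

/-- If the miscalibration has constant sign (`g(z) ≥ z` μ-a.e. or `g(z) ≤ z`
μ-a.e., where `g z = P(Y = k | Z_k = z)` is a density with respect to the law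
`μ` of `Z_k`), then the KS error
`sup_{σ∈[0,1]} |P(Y = k ∧ Z_k ≤ σ) − ∫_{[0,σ]} z dμ|` equals the expected
calibration error `∫_{[0,1]} |g z − z| dμ`, and the supremum is attained at
`σ = 1`. -/
theorem stmt6 {Ω : Type*} [MeasurableSpace Ω] (P : Measure Ω) [IsProbabilityMeasure P]
    (Zk : Ω → ℝ) (hZk : Measurable Zk) (hZ01 : ∀ ω, Zk ω ∈ Set.Icc (0 : ℝ) 1)
    (Y : Ω → ℕ) (hY : Measurable Y) (k : ℕ)
    (g : ℝ → ℝ) (hgm : Measurable g) (hgi : Integrable g (P.map Zk))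
    (hg : ∀ A : Set ℝ, MeasurableSet A →
      (P {ω | Y ω = k ∧ Zk ω ∈ A}).toReal = ∫ σ in A, g σ ∂(P.map Zk))
    (hsign : (∀ᵐ z ∂(P.map Zk), z ≤ g z) ∨ (∀ᵐ z ∂(P.map Zk), g z ≤ z)) :
    (⨆ σ ∈ Set.Icc (0 : ℝ) 1,
      |(P {ω | Y ω = k ∧ Zk ω ≤ σ}).toReal - ∫ z in Set.Icc 0 σ, z ∂(P.map Zk)|)
        = ∫ z in Set.Icc (0 : ℝ) 1, |g z - z| ∂(P.map Zk) ∧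
    |(P {ω | Y ω = k ∧ Zk ω ≤ (1 : ℝ)}).toReal - ∫ z in Set.Icc (0 : ℝ) 1, z ∂(P.map Zk)|
        = ∫ z in Set.Icc (0 : ℝ) 1, |g z - z| ∂(P.map Zk) :=
  stmt6_general P Zk hZ01 Y k g hgi hg hsign
end

section
/- If a classifier is calibrated in the multi-class sense (P(Y = k | Z = z) = z_k for all k), then it is also within-top-r calibrated: the conditional probability that the true label is among the top r predicted classes, given that the sum of the top r scores equals σ, is σ. -/
/-!
Splitting on the true label, `P(Y ∈ T Z, Z ∈ A) = ∑ₖ P(Y = k, Z ∈ A ∩ {z | k ∈ T z})`, and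
multi-class calibration turns the `k`-th term into `∫_A 1{k ∈ T z} z_k`. Summing over `k` gives
`P(Y ∈ T Z, Z ∈ A) = ∫_A S` for the top-set score `S z = ∑_{j ∈ T z} z_j`; taking `A = S⁻¹' B`
and pushing the integral forward along `S` gives the claim. Exchanging sum and integral needs
each `z ↦ z_k` to be integrable, which the calibration identity itself forces.
-/

open MeasureTheory Set

theorem integrable_of_forall_abs_setIntegral_le {α : Type*} [MeasurableSpace α]
    {μ : Measure α} [IsFiniteMeasure μ] {f : α → ℝ} (hf : Measurable f) {C : ℝ}
    (h : ∀ s, MeasurableSet s → |∫ x in s, f x ∂μ| ≤ C) : Integrable f μ := by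
  set t : ℕ → Set α := fun n => {x | |f x| ≤ n}
  have ht_meas n : MeasurableSet (t n) := measurableSet_le hf.abs measurable_const
  have ht_mono : Monotone t := fun m n hmn x (hx : |f x| ≤ m) =>
    hx.trans (Nat.cast_le.mpr hmn)
  have ht_univ : ⋃ n, t n = univ :=
    eq_univ_of_forall fun x => mem_iUnion.mpr (exists_nat_ge |f x|)
  have ht_int n : IntegrableOn f (t n) μ :=
    Measure.integrableOn_of_bounded (M := n) (measure_ne_top μ _) hf.aestronglyMeasurable
      ((ae_restrict_mem (ht_meas n)).mono fun x hx => by rwa [Real.norm_eq_abs])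
  -- On `t n` the function `f` is integrable, so there `h` bounds genuine integrals.
  have ht_bound n : ∫⁻ x in t n, ‖f x‖ₑ ∂μ ≤ ENNReal.ofReal (C + C) := by
    rw [← ofReal_integral_norm_eq_lintegral_enorm (ht_int n)]
    refine ENNReal.ofReal_le_ofReal ?_
    have hpos : MeasurableSet {x | 0 ≤ f x} := measurableSet_le measurable_const hf
    have hneg : MeasurableSet {x | f x ≤ 0} := measurableSet_le hf measurable_const
    rw [integral_norm_eq_pos_sub_neg (ht_int n), Measure.restrict_restrict hpos,
      Measure.restrict_restrict hneg]
    linarith [(abs_le.mp (h _ (hpos.inter (ht_meas n)))).2,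
      (abs_le.mp (h _ (hneg.inter (ht_meas n)))).1]
  refine ⟨hf.aestronglyMeasurable, ?_⟩
  calc ∫⁻ x, ‖f x‖ₑ ∂μ = μ.withDensity (‖f ·‖ₑ) (⋃ n, t n) := by
        rw [ht_univ, withDensity_apply _ MeasurableSet.univ, Measure.restrict_univ]
    _ = ⨆ n, ∫⁻ x in t n, ‖f x‖ₑ ∂μ := by
        simp only [ht_mono.measure_iUnion, withDensity_apply _ (ht_meas _)]
    _ ≤ ENNReal.ofReal (C + C) := iSup_le ht_bound
    _ < ⊤ := ENNReal.ofReal_lt_top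

theorem measurableSet_mem_of_measurableSet_eq {X ι : Type*} [MeasurableSpace X] [Fintype ι]
    {T : X → Finset ι} (hT : ∀ s, MeasurableSet {x | T x = s}) (k : ι) :
    MeasurableSet {x | k ∈ T x} := by
  have : {x | k ∈ T x} = ⋃ (s : Finset ι) (_ : k ∈ s), {x | T x = s} := by
    ext x; simp
  rw [this]
  exact .iUnion fun s => .iUnion fun _ => hT s

theorem sum_finset_eq_sum_indicator {ι : Type*} [Fintype ι] (T : (ι → ℝ) → Finset ι)
    (z : ι → ℝ) : ∑ j ∈ T z, z j = ∑ k, {z | k ∈ T z}.indicator (fun z => z k) z := by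
  simp [Set.indicator]

theorem toReal_measure_label_mem_eq_setIntegral_sum {Ω ι : Type*} [MeasurableSpace Ω]
    (P : Measure Ω) [IsFiniteMeasure P] [Fintype ι] [MeasurableSpace ι]
    [MeasurableSingletonClass ι] {Z : Ω → (ι → ℝ)} (hZ : Measurable Z) {Y : Ω → ι}
    (hY : Measurable Y) {T : (ι → ℝ) → Finset ι} (hT : ∀ k, MeasurableSet {z | k ∈ T z})
    (hcal : ∀ k : ι, ∀ A : Set (ι → ℝ), MeasurableSet A →
      (P {ω | Y ω = k ∧ Z ω ∈ A}).toReal = ∫ z in A, z k ∂(P.map Z))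
    (hint : ∀ k, Integrable (fun z => z k) (P.map Z)) {A : Set (ι → ℝ)} (hA : MeasurableSet A) :
    (P {ω | Y ω ∈ T (Z ω) ∧ Z ω ∈ A}).toReal = ∫ z in A, ∑ j ∈ T z, z j ∂(P.map Z) := by
  set E : ι → Set Ω := fun k => {ω | Y ω = k ∧ Z ω ∈ A ∩ {z | k ∈ T z}}
  have hE : {ω | Y ω ∈ T (Z ω) ∧ Z ω ∈ A} = ⋃ k, E k := by
    ext ω
    simp only [E, mem_ofPred_eq, mem_iUnion, mem_inter_iff]
    exact ⟨fun h => ⟨_, rfl, h.2, h.1⟩, fun ⟨_, hk, hA, hT⟩ => ⟨hk ▸ hT, hA⟩⟩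
  have hE_meas k : MeasurableSet (E k) :=
    (hY (measurableSet_singleton k)).inter (hZ (hA.inter (hT k)))
  have hE_disj : Pairwise (Function.onFun Disjoint E) := fun k l hkl =>
    disjoint_left.mpr fun _ hk hl => hkl (hk.1.symm.trans hl.1)
  simp_rw [sum_finset_eq_sum_indicator T]
  rw [hE, measure_iUnion hE_disj hE_meas, tsum_fintype,
    ENNReal.toReal_sum fun k _ => measure_ne_top P (E k),
    integral_finsetSum _ fun k _ => ((hint k).indicator (hT k)).integrableOn]
  refine Finset.sum_congr rfl fun k _ => ?_
  rw [hcal k _ (hA.inter (hT k)), setIntegral_indicator (hT k)]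

theorem stmt11_general {Ω : Type*} [MeasurableSpace Ω] (P : Measure Ω) [IsProbabilityMeasure P]
    {K : ℕ} (Z : Ω → (Fin K → ℝ)) (hZ : Measurable Z) (Y : Ω → Fin K) (hY : Measurable Y)
    (T : (Fin K → ℝ) → Finset (Fin K))
    (hTmeas : ∀ s : Finset (Fin K), MeasurableSet {z | T z = s})
    (hcal : ∀ k : Fin K, ∀ A : Set (Fin K → ℝ), MeasurableSet A →
      (P {ω | Y ω = k ∧ Z ω ∈ A}).toReal = ∫ z in A, z k ∂(P.map Z)) :
    ∀ B : Set ℝ, MeasurableSet B →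
      (P {ω | Y ω ∈ T (Z ω) ∧ (∑ j ∈ T (Z ω), Z ω j) ∈ B}).toReal
        = ∫ σ in B, σ ∂(P.map fun ω => ∑ j ∈ T (Z ω), Z ω j) := by
  intro B hB
  have hT := measurableSet_mem_of_measurableSet_eq hTmeas
  set S : (Fin K → ℝ) → ℝ := fun z => ∑ j ∈ T z, z j
  have hS : Measurable S := by
    simp_rw [S, sum_finset_eq_sum_indicator T]
    exact Finset.measurable_sum _ fun k _ => (measurable_pi_apply k).indicator (hT k)
  have : IsProbabilityMeasure (P.map Z) := Measure.isProbabilityMeasure_map hZ.aemeasurable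
  have hint k : Integrable (fun z => z k) (P.map Z) := by
    refine integrable_of_forall_abs_setIntegral_le (measurable_pi_apply k) (C := 1) fun A hA => ?_
    rw [← hcal k A hA, abs_of_nonneg ENNReal.toReal_nonneg, ← measureReal_def]
    exact measureReal_le_one
  calc (P {ω | Y ω ∈ T (Z ω) ∧ Z ω ∈ S ⁻¹' B}).toReal
      = ∫ z in S ⁻¹' B, S z ∂(P.map Z) :=
        toReal_measure_label_mem_eq_setIntegral_sum P hZ hY hT hcal hint (hS hB)
    _ = ∫ σ in B, σ ∂((P.map Z).map S) :=
        (setIntegral_map hB aestronglyMeasurable_id hS.aemeasurable).symm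
    _ = ∫ σ in B, σ ∂(P.map (S ∘ Z)) := by rw [Measure.map_map hS hZ]

/-- If a classifier is multi-class calibrated (`P(Y = k | Z = z) = z k`,
expressed as a density identity with respect to the law of `Z`), then it is
within-top-`r` calibrated: the probability that the true label is among the
top `r` predicted classes, conditional on the sum of the top `r` scores,
equals that sum (again expressed as a density identity with respect to the
law of the top-`r` score sum). Here `T z` is the (fixed, measurable) set of
indices of the `r` largest coordinates of `z`. -/
theorem stmt11 {Ω : Type*} [MeasurableSpace Ω] (P : Measure Ω) [IsProbabilityMeasure P]
    {K : ℕ} (Z : Ω → (Fin K → ℝ)) (hZ : Measurable Z) (Y : Ω → Fin K) (hY : Measurable Y)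
    (r : ℕ) (T : (Fin K → ℝ) → Finset (Fin K))
    (hTmeas : ∀ s : Finset (Fin K), MeasurableSet {z | T z = s})
    (hTcard : ∀ z, (T z).card = r)
    (hTtop : ∀ z, ∀ i ∈ T z, ∀ j ∉ T z, z j ≤ z i)
    (hcal : ∀ k : Fin K, ∀ A : Set (Fin K → ℝ), MeasurableSet A →
      (P {ω | Y ω = k ∧ Z ω ∈ A}).toReal = ∫ z in A, z k ∂(P.map Z)) :
    ∀ B : Set ℝ, MeasurableSet B →
      (P {ω | Y ω ∈ T (Z ω) ∧ (∑ j ∈ T (Z ω), Z ω j) ∈ B}).toReal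
        = ∫ σ in B, σ ∂(P.map fun ω => ∑ j ∈ T (Z ω), Z ω j) :=
  stmt11_general P Z hZ Y hY T hTmeas hcal
end

section
/- If a classifier is multi-class calibrated, then for each r it is top-r calibrated: P(y^{(−r)} = 1 | f^{(−r)}(X) = σ) = σ for almost every σ, where f^{(−r)}(X) is the r-th largest score and y^{(−r)} = 1[Y equals the class achieving the r-th largest score]. -/
/-!
Split the event `{Y = a(Z), Z_{a(Z)} ∈ B}` according to the value `i` of the selected index:
on the piece `{a(Z) = i}` the selected score is the coordinate `Z_i`, so calibration of `Z_i`
on the set `{z | a z = i, z_i ∈ B}` gives that piece's contribution, and summing over `i`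
yields calibration of the selected score. The integrability needed to split the integral also
comes from calibration: it forces every coordinate of `Z` into `[0, 1]` almost surely.
-/

open MeasureTheory Set

section SetIntegral

variable {α : Type*} [MeasurableSpace α] {μ : Measure α} [IsFiniteMeasure μ] {f : α → ℝ}

lemma ae_mem_Icc_of_setIntegral_mem_Icc (hf : Measurable f)
    (h : ∀ A, MeasurableSet A → ∫ x in A, f x ∂μ ∈ Icc 0 (μ.real A)) :
    ∀ᵐ x ∂μ, f x ∈ Icc 0 1 := by
  -- `f` need not be integrable a priori, so work on the sets `{|f| ≤ n}` where it is bounded.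
  have hbounded : ∀ n : ℕ, ∀ᵐ x ∂μ, |f x| ≤ n → f x ∈ Icc 0 1 := by
    intro n
    set S := {x | |f x| ≤ n}
    have hS : MeasurableSet S := measurableSet_le hf.abs measurable_const
    have hint : Integrable f (μ.restrict S) :=
      Integrable.of_bound hf.aestronglyMeasurable n
        ((ae_restrict_iff' hS).2 (ae_of_all _ fun x hx => hx))
    have hrestr : ∀ A, MeasurableSet A →
        ∫ x in A, f x ∂μ.restrict S ∈ Icc 0 ((μ.restrict S).real A) := by
      intro A hA
      rw [Measure.restrict_restrict hA, measureReal_restrict_apply hA]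
      exact h _ (hA.inter hS)
    have hnonneg := ae_nonneg_of_forall_setIntegral_nonneg hint fun A hA _ => (hrestr A hA).1
    have hle_one := ae_le_of_forall_setIntegral_le hint (integrable_const 1) fun A hA _ => by
      simpa [setIntegral_const] using (hrestr A hA).2
    exact (ae_restrict_iff' hS).1 (hnonneg.and hle_one)
  filter_upwards [ae_all_iff.2 hbounded] with x hx
  exact hx _ (Nat.le_ceil _)

lemma integrable_of_setIntegral_mem_Icc (hf : Measurable f)
    (h : ∀ A, MeasurableSet A → ∫ x in A, f x ∂μ ∈ Icc 0 (μ.real A)) :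
    Integrable f μ := by
  refine Integrable.of_bound hf.aestronglyMeasurable 1 ?_
  filter_upwards [ae_mem_Icc_of_setIntegral_mem_Icc hf h] with x hx
  rw [Real.norm_eq_abs, abs_le]
  exact ⟨by linarith [hx.1], hx.2⟩

end SetIntegral

section Calibration

variable {Ω ι : Type*} [MeasurableSpace Ω] {P : Measure Ω} [IsFiniteMeasure P]
  {Z : Ω → ι → ℝ} {Y : Ω → ι}

lemma integrable_eval_of_calibrated (hZ : Measurable Z)
    (hcal : ∀ k A, MeasurableSet A →
      (P {ω | Y ω = k ∧ Z ω ∈ A}).toReal = ∫ z in A, z k ∂P.map Z) (k : ι) :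
    Integrable (fun z => z k) (P.map Z) := by
  refine integrable_of_setIntegral_mem_Icc (measurable_pi_apply k) fun A hA => ?_
  rw [← hcal k A hA, map_measureReal_apply hZ hA]
  exact ⟨ENNReal.toReal_nonneg, measureReal_mono fun ω hω => hω.2⟩

variable [MeasurableSpace ι] [MeasurableSingletonClass ι] [Fintype ι] {a : (ι → ℝ) → ι}

lemma measurable_eval_self (ha : Measurable a) : Measurable fun z : ι → ℝ => z (a z) :=
  (measurable_from_prod_countable_left (f := fun p : (ι → ℝ) × ι => p.1 p.2)
    fun i => measurable_pi_apply i).comp (measurable_id.prodMk ha)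

lemma setIntegral_eval_self_eq_sum (ha : Measurable a) {μ : Measure (ι → ℝ)}
    (hint : ∀ i, Integrable (fun z => z i) μ) {B : Set ℝ} (hB : MeasurableSet B) :
    ∫ z in (fun z => z (a z)) ⁻¹' B, z (a z) ∂μ
      = ∑ i, ∫ z in {z | a z = i ∧ z i ∈ B}, z i ∂μ := by
  have hpiece : ∀ i, MeasurableSet {z : ι → ℝ | a z = i ∧ z i ∈ B} := fun i =>
    (ha (measurableSet_singleton i)).inter (measurable_pi_apply i hB)
  have hcover : (fun z => z (a z)) ⁻¹' B = ⋃ i, {z | a z = i ∧ z i ∈ B} := by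
    ext z
    simp
  have hdisj : Pairwise (Function.onFun Disjoint fun i => {z : ι → ℝ | a z = i ∧ z i ∈ B}) :=
    fun i j hij => disjoint_left.2 fun z hi hj => hij (hi.1.symm.trans hj.1)
  rw [hcover, integral_iUnion_fintype hpiece hdisj fun i =>
    (hint i).integrableOn.congr_fun (fun z hz => by rw [hz.1]) (hpiece i)]
  exact Finset.sum_congr rfl fun i _ => setIntegral_congr_fun (hpiece i) fun z hz => by rw [hz.1]

lemma measureReal_eval_self_eq_sum (hZ : Measurable Z) (hY : Measurable Y) (ha : Measurable a)
    {B : Set ℝ} (hB : MeasurableSet B) :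
    P.real {ω | Y ω = a (Z ω) ∧ Z ω (a (Z ω)) ∈ B}
      = ∑ i, P.real {ω | Y ω = i ∧ Z ω ∈ {z | a z = i ∧ z i ∈ B}} := by
  have hcover : {ω | Y ω = a (Z ω) ∧ Z ω (a (Z ω)) ∈ B}
      = ⋃ i, {ω | Y ω = i ∧ Z ω ∈ {z | a z = i ∧ z i ∈ B}} := by
    ext ω
    simp only [mem_ofPred_eq, mem_iUnion]
    constructor
    · rintro ⟨hYa, hB⟩
      exact ⟨Y ω, rfl, hYa.symm, hYa ▸ hB⟩
    · rintro ⟨i, rfl, haY, hB⟩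
      exact ⟨haY.symm, haY ▸ hB⟩
  rw [hcover, measureReal_iUnion_fintype]
  · exact fun i j hij => disjoint_left.2 fun ω hi hj => hij (hi.1.symm.trans hj.1)
  · exact fun i => (hY (measurableSet_singleton i)).inter
      (hZ ((ha (measurableSet_singleton i)).inter (measurable_pi_apply i hB)))

theorem calibrated_eval_self (hZ : Measurable Z) (hY : Measurable Y) (ha : Measurable a)
    (hcal : ∀ k A, MeasurableSet A →
      (P {ω | Y ω = k ∧ Z ω ∈ A}).toReal = ∫ z in A, z k ∂P.map Z)
    {B : Set ℝ} (hB : MeasurableSet B) :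
    (P {ω | Y ω = a (Z ω) ∧ Z ω (a (Z ω)) ∈ B}).toReal
      = ∫ σ in B, σ ∂P.map fun ω => Z ω (a (Z ω)) := by
  have hg := measurable_eval_self ha
  have hlaw : (P.map fun ω => Z ω (a (Z ω))) = (P.map Z).map fun z => z (a z) :=
    (Measure.map_map hg hZ).symm
  rw [hlaw, setIntegral_map (f := fun σ => σ) hB aestronglyMeasurable_id hg.aemeasurable,
    setIntegral_eval_self_eq_sum ha (integrable_eval_of_calibrated hZ hcal) hB]
  refine (measureReal_eval_self_eq_sum hZ hY ha hB).trans (Finset.sum_congr rfl fun i _ => ?_)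
  exact hcal i _ ((ha (measurableSet_singleton i)).inter (measurable_pi_apply i hB))

end Calibration

theorem stmt12_general {Ω : Type*} [MeasurableSpace Ω] (P : Measure Ω) [IsProbabilityMeasure P]
    {K : ℕ} (Z : Ω → (Fin K → ℝ)) (hZ : Measurable Z) (Y : Ω → Fin K) (hY : Measurable Y)
    (a : (Fin K → ℝ) → Fin K)
    (hameas : ∀ i : Fin K, MeasurableSet {z | a z = i})
    (hcal : ∀ k : Fin K, ∀ A : Set (Fin K → ℝ), MeasurableSet A →
      (P {ω | Y ω = k ∧ Z ω ∈ A}).toReal = ∫ z in A, z k ∂(P.map Z)) :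
    ∀ B : Set ℝ, MeasurableSet B →
      (P {ω | Y ω = a (Z ω) ∧ Z ω (a (Z ω)) ∈ B}).toReal
        = ∫ σ in B, σ ∂(P.map fun ω => Z ω (a (Z ω))) :=
  fun _ hB => calibrated_eval_self hZ hY (measurable_to_countable' hameas) hcal hB

/-- If a classifier is multi-class calibrated, then for each `r` it is top-`r`
calibrated: `P(y⁽⁻ʳ⁾ = 1 | f⁽⁻ʳ⁾(X) = σ) = σ` for a.e. `σ`, expressed as a
density identity with respect to the law of the `r`-th largest score
`f⁽⁻ʳ⁾(X) = Z (a Z)`, where `a z` is the (measurably tie-broken) index of the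
`r`-th largest coordinate of `z`. -/
theorem stmt12 {Ω : Type*} [MeasurableSpace Ω] (P : Measure Ω) [IsProbabilityMeasure P]
    {K : ℕ} (Z : Ω → (Fin K → ℝ)) (hZ : Measurable Z) (Y : Ω → Fin K) (hY : Measurable Y)
    (r : ℕ) (hr : 1 ≤ r) (a : (Fin K → ℝ) → Fin K)
    (hameas : ∀ i : Fin K, MeasurableSet {z | a z = i})
    (hrank : ∀ z : Fin K → ℝ,
      ((Finset.univ.filter fun j => z (a z) < z j).card < r) ∧
      (r ≤ (Finset.univ.filter fun j => z (a z) ≤ z j).card))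
    (hcal : ∀ k : Fin K, ∀ A : Set (Fin K → ℝ), MeasurableSet A →
      (P {ω | Y ω = k ∧ Z ω ∈ A}).toReal = ∫ z in A, z k ∂(P.map Z)) :
    ∀ B : Set ℝ, MeasurableSet B →
      (P {ω | Y ω = a (Z ω) ∧ Z ω (a (Z ω)) ∈ B}).toReal
        = ∫ σ in B, σ ∂(P.map fun ω => Z ω (a (Z ω))) :=
  stmt12_general P Z hZ Y hY a hameas hcal
end
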